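/- Resonant drift of the tip trajectory: let c : ℝ → ℝ² and ω : ℝ → ℝ be continuous and T-periodic for some T > 0, let θ, R solve dθ/dt = ω(t), dR/dt = exp(τθ(t))·c(t), and suppose Θ = ∫₀ᵀ ω(s)ds is an integer multiple of 2π. Then R(t + nT) = R(t) + n·(R(T) − R(0)) for all t ∈ ℝ and all natural numbers n; in particular, if R(T) ≠ R(0) the trajectory is unbounded, drifting by the fixed displacement R(T) − R(0) each period. -/

import Mathlib

open Matrix Real intervalIntegral

/-!
Since the net rotation Θ lies in 2πℤ, integrating θ' = ω over a period gives
θ(t + T) = θ(t) + Θ, so the rotation exp(τθ(t)) is T-periodic (τ² = -1 makes exp(xτ) the image of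
e^{ix} under ℂ → M₂(ℝ), i ↦ τ). Hence R' is T-periodic, so R(t + T) - R(t) has zero derivative
and is constant. Iterating, R drifts by R(T) - R(0) per period, which is unbounded unless the
drift vanishes.
-/

/-- The 2×2 real matrix τ = [[0,-1],[1,0]], so that exp(τθ) is rotation by angle θ. -/
noncomputable def tau : Matrix (Fin 2) (Fin 2) ℝ := !![0, -1; 1, 0]

lemma tau_mul_tau : tau * tau = -1 := by
  ext i j
  fin_cases i <;> fin_cases j <;> simp [tau, Matrix.mul_apply, Fin.sum_univ_two]

lemma exp_smul_tau (x : ℝ) :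
    NormedSpace.exp (x • tau) = Complex.liftAux tau tau_mul_tau (Complex.exp (x * Complex.I)) := by
  let _ : NormedRing (Matrix (Fin 2) (Fin 2) ℝ) := Matrix.linftyOpNormedRing
  let _ : NormedAlgebra ℝ (Matrix (Fin 2) (Fin 2) ℝ) := Matrix.linftyOpNormedAlgebra
  have hcont : Continuous (Complex.liftAux tau tau_mul_tau) :=
    (Complex.liftAux tau tau_mul_tau).toLinearMap.continuous_of_finiteDimensional
  have hx : x • tau = Complex.liftAux tau tau_mul_tau (x • Complex.I) := by
    rw [map_smul, Complex.liftAux_apply_I]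
  rw [hx]
  -- `map_exp` states its exponential through the local normed-algebra instance, hence `erw`.
  erw [← NormedSpace.map_exp _ hcont]
  rw [← Complex.exp_eq_exp_ℂ, Complex.real_smul]

lemma exp_smul_tau_periodic :
    Function.Periodic (fun x : ℝ ↦ NormedSpace.exp (x • tau)) (2 * π) := by
  intro x
  simp only [exp_smul_tau]
  rw [show ((x + 2 * π : ℝ) : ℂ) * Complex.I = x * Complex.I + 2 * π * Complex.I by push_cast; ring,
    Complex.exp_periodic]

theorem sub_eq_sub_of_hasDerivAt_of_periodic {E : Type*} [NormedAddCommGroup E]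
    [NormedSpace ℝ E] {f f' : ℝ → E} {T : ℝ} (hf : ∀ t, HasDerivAt f (f' t) t)
    (hf' : Function.Periodic f' T) (t : ℝ) : f (t + T) - f t = f T - f 0 := by
  have hderiv (t : ℝ) : HasDerivAt (fun t ↦ f (t + T) - f t) 0 t := by
    have := ((hf (t + T)).comp_add_const t T).sub (hf t)
    rwa [hf' t, sub_self] at this
  simpa using is_const_of_deriv_eq_zero (fun t ↦ (hderiv t).differentiableAt)
    (fun t ↦ (hderiv t).deriv) t 0

theorem apply_add_nat_mul_eq_of_apply_add_eq {E : Type*} [AddCommGroup E] [Module ℝ E]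
    {f : ℝ → E} {T : ℝ} {d : E} (hf : ∀ t, f (t + T) = f t + d) (t : ℝ) (n : ℕ) :
    f (t + n * T) = f t + (n : ℝ) • d := by
  induction n with
  | zero => simp
  | succ n ih =>
    rw [Nat.cast_succ, add_one_mul, ← add_assoc, hf, ih, add_smul, one_smul, add_assoc]

theorem not_exists_norm_add_natCast_smul_le {E : Type*} [NormedAddCommGroup E]
    [NormedSpace ℝ E] (a : E) {d : E} (hd : d ≠ 0) :
    ¬ ∃ M : ℝ, ∀ n : ℕ, ‖a + (n : ℝ) • d‖ ≤ M := by
  rintro ⟨M, hM⟩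
  obtain ⟨n, hn⟩ := exists_nat_gt ((M + ‖a‖) / ‖d‖)
  have hgrowth : (n : ℝ) * ‖d‖ ≤ M + ‖a‖ := calc
    (n : ℝ) * ‖d‖ = ‖(a + (n : ℝ) • d) - a‖ := by simp [norm_smul]
    _ ≤ ‖a + (n : ℝ) • d‖ + ‖a‖ := norm_sub_le _ _
    _ ≤ M + ‖a‖ := by gcongr; exact hM n
  rw [div_lt_iff₀ (norm_pos_iff.mpr hd)] at hn
  linarith

theorem tip_trajectory_resonant_drift_general
    (T : ℝ)
    (c : ℝ → EuclideanSpace ℝ (Fin 2)) (ω : ℝ → ℝ)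
    (hω_cont : Continuous ω)
    (hc_per : Function.Periodic c T) (hω_per : Function.Periodic ω T)
    (θ : ℝ → ℝ) (R : ℝ → EuclideanSpace ℝ (Fin 2))
    (hθ : ∀ t, HasDerivAt θ (ω t) t)
    (hR : ∀ t, HasDerivAt R (Matrix.toEuclideanLin (NormedSpace.exp (θ t • tau)) (c t)) t)
    (hΘ : ∃ k : ℤ, (∫ s in (0:ℝ)..T, ω s) = k * (2 * π)) :
    (∀ (t : ℝ) (n : ℕ), R (t + n * T) = R t + (n : ℝ) • (R T - R 0)) ∧
      (R T ≠ R 0 → ¬ ∃ M : ℝ, ∀ t : ℝ, ‖R t‖ ≤ M) := by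
  obtain ⟨k, hk⟩ := hΘ
  have hθ_shift (t : ℝ) : θ (t + T) - θ t = k * (2 * π) := by
    rw [sub_eq_sub_of_hasDerivAt_of_periodic hθ hω_per t, ← hk,
      integral_eq_sub_of_hasDerivAt (fun t _ ↦ hθ t) (hω_cont.intervalIntegrable _ _)]
  have hrot_per (t : ℝ) : NormedSpace.exp (θ (t + T) • tau) = NormedSpace.exp (θ t • tau) := by
    rw [eq_add_of_sub_eq' (hθ_shift t)]
    exact exp_smul_tau_periodic.int_mul k (θ t)
  have hR_shift (t : ℝ) : R (t + T) - R t = R T - R 0 :=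
    sub_eq_sub_of_hasDerivAt_of_periodic hR (fun t ↦ by simp only [hrot_per t, hc_per t]) t
  have hdrift := apply_add_nat_mul_eq_of_apply_add_eq fun t ↦ eq_add_of_sub_eq' (hR_shift t)
  refine ⟨hdrift, fun hne ⟨M, hM⟩ ↦ ?_⟩
  refine not_exists_norm_add_natCast_smul_le (R 0) (sub_ne_zero.mpr hne) ⟨M, fun n ↦ ?_⟩
  exact hdrift 0 n ▸ hM (0 + n * T)

/-- Resonant drift of the tip trajectory: if c and ω are continuous and T-periodic,
θ' = ω(t), R' = exp(τθ(t))c(t), and the net rotation Θ = ∫₀ᵀ ω is an integer multiple of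
2π, then R(t + nT) = R(t) + n(R(T) − R(0)) for all t and n ∈ ℕ; in particular, if
R(T) ≠ R(0) then the trajectory is unbounded. -/
theorem tip_trajectory_resonant_drift
    (T : ℝ) (hT : 0 < T)
    (c : ℝ → EuclideanSpace ℝ (Fin 2)) (ω : ℝ → ℝ)
    (hc_cont : Continuous c) (hω_cont : Continuous ω)
    (hc_per : Function.Periodic c T) (hω_per : Function.Periodic ω T)
    (θ : ℝ → ℝ) (R : ℝ → EuclideanSpace ℝ (Fin 2))
    (hθ : ∀ t, HasDerivAt θ (ω t) t)
    (hR : ∀ t, HasDerivAt R (Matrix.toEuclideanLin (NormedSpace.exp (θ t • tau)) (c t)) t)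
    (hΘ : ∃ k : ℤ, (∫ s in (0:ℝ)..T, ω s) = k * (2 * π)) :
    (∀ (t : ℝ) (n : ℕ), R (t + n * T) = R t + (n : ℝ) • (R T - R 0)) ∧
      (R T ≠ R 0 → ¬ ∃ M : ℝ, ∀ t : ℝ, ‖R t‖ ≤ M) :=
  tip_trajectory_resonant_drift_general T c ω hω_cont hc_per hω_per θ R hθ hR hΘ
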